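/- Let A be a real matrix with exactly N nonzero singular values σ̃_1 ≥ σ̃_2 ≥ ... ≥ σ̃_N > 0 (listed in decreasing order), let I be a subset of the row indices of A with |I| < N, and let D_I be the diagonal matrix with (D_I)_{ii} = 0 for i ∈ I and (D_I)_{ii} = 1 for i ∉ I. Then the smallest nonzero singular value of D_I A is at most σ̃_k, where k = N − |I|; that is, min{σ : σ is a nonzero singular value of D_I A} ≤ σ̃_{N−|I|}. -/

import Mathlib

open Matrix Submodule Module Finset

namespace SVaux

variable {n : ℕ} {M : Matrix (Fin n) (Fin n) ℝ}

/-- Span of a set of eigenvectors. -/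
noncomputable def espan (hM : M.IsHermitian) (S : Finset (Fin n)) :
    Submodule ℝ (EuclideanSpace ℝ (Fin n)) :=
  Submodule.span ℝ (hM.eigenvectorBasis '' ↑S)

lemma finrank_espan (hM : M.IsHermitian) (S : Finset (Fin n)) :
    finrank ℝ (espan hM S) = S.card := by
  have li : LinearIndependent ℝ (fun x : (↑S : Set (Fin n)) => hM.eigenvectorBasis ↑x) :=
    hM.eigenvectorBasis.orthonormal.linearIndependent.comp _ Subtype.coe_injective
  rw [espan, Set.image_eq_range]
  rw [finrank_span_eq_card li]
  exact Fintype.card_coe S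

lemma inner_eigenvector_eq_zero (hM : M.IsHermitian) {S : Finset (Fin n)} {x : EuclideanSpace ℝ (Fin n)}
    (hx : x ∈ espan hM S) {j : Fin n} (hj : j ∉ S) :
    (inner ℝ (hM.eigenvectorBasis j) x : ℝ) = 0 := by
  induction hx using Submodule.span_induction with
  | mem y hy =>
    obtain ⟨i, hi, rfl⟩ := hy
    exact hM.eigenvectorBasis.orthonormal.2 (fun h => hj (h ▸ hi))
  | zero => simp
  | add y z _ _ hy hz => rw [inner_add_right, hy, hz, add_zero]
  | smul a y _ hy => rw [inner_smul_right, hy, mul_zero]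

lemma inner_mulVec_eq_sum (hM : M.IsHermitian) {S : Finset (Fin n)} {x : EuclideanSpace ℝ (Fin n)}
    (hx : x ∈ espan hM S) :
    (inner ℝ x (WithLp.toLp 2 (M *ᵥ x)) : ℝ) = ∑ i ∈ S, hM.eigenvalues i * (inner ℝ (hM.eigenvectorBasis i) x : ℝ) ^ 2 := by
  classical
  set b := hM.eigenvectorBasis with hb
  set c : Fin n → ℝ := fun i => (inner ℝ (b i) x : ℝ) with hc
  have hxr : ∑ i : Fin n, c i • b i = x := by
    simpa [hc, b.repr_apply_apply] using b.sum_repr x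
  have hMx : (WithLp.toLp 2 (M *ᵥ x) : EuclideanSpace ℝ (Fin n)) = ∑ i : Fin n, (c i * hM.eigenvalues i) • b i := by
    conv_lhs => rw [← hxr]
    rw [WithLp.ofLp_sum, Matrix.mulVec_sum, WithLp.toLp_sum]
    refine Finset.sum_congr rfl fun i _ => ?_
    rw [WithLp.ofLp_smul, Matrix.mulVec_smul, hM.mulVec_eigenvectorBasis i, smul_smul,
      WithLp.toLp_smul, WithLp.toLp_ofLp]
  rw [hMx, inner_sum]
  have huniv : ∀ i : Fin n, (inner ℝ x ((c i * hM.eigenvalues i) • (b i : EuclideanSpace ℝ (Fin n))) : ℝ)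
      = hM.eigenvalues i * c i ^ 2 := by
    intro i
    rw [real_inner_smul_right]
    rw [real_inner_comm]
    ring
  rw [Finset.sum_congr rfl fun i _ => huniv i]
  refine (Finset.sum_subset (Finset.subset_univ S) fun i _ hiS => ?_).symm
  have hci : c i = 0 := inner_eigenvector_eq_zero hM hx hiS
  rw [hci]
  ring

lemma norm_sq_eq_sum (hM : M.IsHermitian) {S : Finset (Fin n)} {x : EuclideanSpace ℝ (Fin n)}
    (hx : x ∈ espan hM S) :
    ‖x‖ ^ 2 = ∑ i ∈ S, (inner ℝ (hM.eigenvectorBasis i) x : ℝ) ^ 2 := by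
  classical
  set b := hM.eigenvectorBasis with hb
  set c : Fin n → ℝ := fun i => (inner ℝ (b i) x : ℝ) with hc
  have hxr : ∑ i : Fin n, c i • b i = x := by
    simpa [hc, b.repr_apply_apply] using b.sum_repr x
  have key : ‖x‖ ^ 2 = (inner ℝ x x : ℝ) := (real_inner_self_eq_norm_sq x).symm
  rw [key]
  nth_rewrite 2 [← hxr]
  rw [inner_sum]
  have huniv : ∀ i : Fin n, (inner ℝ x (c i • (b i : EuclideanSpace ℝ (Fin n))) : ℝ) = c i ^ 2 := by
    intro i
    rw [real_inner_smul_right, real_inner_comm]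
    ring
  rw [Finset.sum_congr rfl fun i _ => huniv i]
  refine (Finset.sum_subset (Finset.subset_univ S) fun i _ hiS => ?_).symm
  have hci : c i = 0 := inner_eigenvector_eq_zero hM hx hiS
  rw [hci]
  ring

lemma rayleigh_le (hM : M.IsHermitian) {S : Finset (Fin n)} {c : ℝ}
    (hc : ∀ i ∈ S, hM.eigenvalues i ≤ c) {x : EuclideanSpace ℝ (Fin n)} (hx : x ∈ espan hM S) :
    (inner ℝ x (WithLp.toLp 2 (M *ᵥ x)) : ℝ) ≤ c * ‖x‖ ^ 2 := by
  rw [inner_mulVec_eq_sum hM hx, norm_sq_eq_sum hM hx, Finset.mul_sum]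
  exact Finset.sum_le_sum fun i hi =>
    mul_le_mul_of_nonneg_right (hc i hi) (sq_nonneg _)

lemma rayleigh_ge (hM : M.IsHermitian) {S : Finset (Fin n)} {c : ℝ}
    (hc : ∀ i ∈ S, c ≤ hM.eigenvalues i) {x : EuclideanSpace ℝ (Fin n)} (hx : x ∈ espan hM S) :
    c * ‖x‖ ^ 2 ≤ (inner ℝ x (WithLp.toLp 2 (M *ᵥ x)) : ℝ) := by
  rw [inner_mulVec_eq_sum hM hx, norm_sq_eq_sum hM hx, Finset.mul_sum]
  exact Finset.sum_le_sum fun i hi =>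
    mul_le_mul_of_nonneg_right (hc i hi) (sq_nonneg _)

lemma exists_ne_zero_mem_inf {V W : Submodule ℝ (EuclideanSpace ℝ (Fin n))}
    (h : n < finrank ℝ V + finrank ℝ W) :
    ∃ x : EuclideanSpace ℝ (Fin n), x ≠ 0 ∧ x ∈ V ∧ x ∈ W := by
  have h1 := Submodule.finrank_sup_add_finrank_inf_eq V W
  have h2 : finrank ℝ ↥(V ⊔ W) ≤ n := by
    simpa [finrank_euclideanSpace] using Submodule.finrank_le (V ⊔ W)
  have h3 : 0 < finrank ℝ ↥(V ⊓ W) := by omega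
  have : Nontrivial ↥(V ⊓ W) := Module.nontrivial_of_finrank_pos h3
  obtain ⟨⟨x, hx⟩, hne⟩ := exists_ne (0 : ↥(V ⊓ W))
  refine ⟨x, ?_, hx.1, hx.2⟩
  simpa [Submodule.mk_eq_zero] using hne

lemma eigenvalue_ge (hM : M.IsHermitian) {k : ℕ} (hk : k < n)
    {V : Submodule ℝ (EuclideanSpace ℝ (Fin n))} (hdim : k + 1 ≤ finrank ℝ V) {c : ℝ}
    (hV : ∀ x ∈ V, c * ‖x‖ ^ 2 ≤ (inner ℝ x (WithLp.toLp 2 (M *ᵥ x)) : ℝ)) :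
    c ≤ hM.eigenvalues (Tuple.sort hM.eigenvalues ⟨n - 1 - k, by omega⟩) := by
  classical
  set t : Fin n := ⟨n - 1 - k, by omega⟩
  set S : Finset (Fin n) := Finset.image (Tuple.sort hM.eigenvalues) (Finset.Iic t) with hS
  have hcard : S.card = n - k := by
    rw [hS, Finset.card_image_of_injective _ (Equiv.injective _), Fin.card_Iic]
    simp only [t]; omega
  have hWrank : finrank ℝ (espan hM S) = n - k := by rw [finrank_espan, hcard]
  obtain ⟨x, hx0, hxV, hxW⟩ := exists_ne_zero_mem_inf
    (V := V) (W := espan hM S) (by omega)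
  have hmu : ∀ i ∈ S, hM.eigenvalues i ≤ hM.eigenvalues (Tuple.sort hM.eigenvalues t) := by
    intro i hi
    rw [hS, Finset.mem_image] at hi
    obtain ⟨j, hj, rfl⟩ := hi
    exact Tuple.monotone_sort hM.eigenvalues (Finset.mem_Iic.mp hj)
  have h1 := hV x hxV
  have h2 := rayleigh_le hM hmu hxW
  have hn : (0 : ℝ) < ‖x‖ ^ 2 := pow_pos (norm_pos_iff.mpr hx0) 2
  exact le_of_mul_le_mul_right (by linarith) hn

lemma eigenvalue_le (hM : M.IsHermitian) {k : ℕ} (hk : k < n)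
    {U : Submodule ℝ (EuclideanSpace ℝ (Fin n))} (hdim : n - k ≤ finrank ℝ U) {c : ℝ}
    (hU : ∀ x ∈ U, (inner ℝ x (WithLp.toLp 2 (M *ᵥ x)) : ℝ) ≤ c * ‖x‖ ^ 2) :
    hM.eigenvalues (Tuple.sort hM.eigenvalues ⟨n - 1 - k, by omega⟩) ≤ c := by
  classical
  set t : Fin n := ⟨n - 1 - k, by omega⟩
  set S : Finset (Fin n) := Finset.image (Tuple.sort hM.eigenvalues) (Finset.Ici t) with hS
  have hcard : S.card = k + 1 := by
    rw [hS, Finset.card_image_of_injective _ (Equiv.injective _), Fin.card_Ici]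
    simp only [t]; omega
  have hWrank : finrank ℝ (espan hM S) = k + 1 := by rw [finrank_espan, hcard]
  obtain ⟨x, hx0, hxU, hxW⟩ := exists_ne_zero_mem_inf
    (V := U) (W := espan hM S) (by omega)
  have hmu : ∀ i ∈ S, hM.eigenvalues (Tuple.sort hM.eigenvalues t) ≤ hM.eigenvalues i := by
    intro i hi
    rw [hS, Finset.mem_image] at hi
    obtain ⟨j, hj, rfl⟩ := hi
    exact Tuple.monotone_sort hM.eigenvalues (Finset.mem_Ici.mp hj)
  have h1 := hU x hxU
  have h2 := rayleigh_ge hM hmu hxW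
  have hn : (0 : ℝ) < ‖x‖ ^ 2 := pow_pos (norm_pos_iff.mpr hx0) 2
  exact le_of_mul_le_mul_right (by linarith) hn

/-- Quadratic form of `Cᴴ * C`. -/
lemma qform {m : ℕ} (C : Matrix (Fin m) (Fin n) ℝ) (x : EuclideanSpace ℝ (Fin n)) :
    (inner ℝ x (WithLp.toLp 2 ((Cᴴ * C) *ᵥ x)) : ℝ) = ∑ i, (C *ᵥ x) i ^ 2 := by
  have h1 : (inner ℝ x (WithLp.toLp 2 ((Cᴴ * C) *ᵥ x)) : ℝ) = x ⬝ᵥ ((Cᴴ * C) *ᵥ x) := by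
    simp [PiLp.inner_apply, dotProduct, mul_comm]
  rw [h1, ← mulVec_mulVec, dotProduct_mulVec, vecMul_conjTranspose]
  simp [dotProduct, sq]

end SVaux




/-- The singular values of a real `m × n` matrix `B`, listed in decreasing order
`singularValues B 0 ≥ singularValues B 1 ≥ …` (`0`-indexed): namely, the square roots of
the eigenvalues of `Bᵀ B` (which over `ℝ` is `Bᴴ B`), sorted decreasingly. -/
noncomputable def singularValues {m n : ℕ} (B : Matrix (Fin m) (Fin n) ℝ) : Fin n → ℝ :=
  fun k => Real.sqrt
    ((show (B.transpose * B).IsHermitian by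
        simpa using Matrix.isHermitian_conjTranspose_mul_self B).eigenvalues
      (Tuple.sort (show (B.transpose * B).IsHermitian by
        simpa using Matrix.isHermitian_conjTranspose_mul_self B).eigenvalues k.rev))

/-- The diagonal matrix `D_I` with `(D_I)_{ii} = 0` for `i ∈ I` and `(D_I)_{ii} = 1` for
`i ∉ I`. -/
def DI {m : ℕ} (I : Finset (Fin m)) : Matrix (Fin m) (Fin m) ℝ :=
  Matrix.diagonal fun i => if i ∈ I then 0 else 1

/-- **Global upper bound for the smallest nonzero singular value.**
If `A` has exactly `N` nonzero singular values `σ̃_1 ≥ … ≥ σ̃_N > 0` (here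
`σ̃_{k+1} = singularValues A k`, `0`-indexed and decreasing) and `I` is a set of row
indices with `|I| < N`, then the smallest nonzero singular value of `D_I A` is at most
`σ̃_{N - |I|}`. -/
theorem smallest_nonzero_singularValue_DIA_le {m n N : ℕ} (A : Matrix (Fin m) (Fin n) ℝ)
    (I : Finset (Fin m)) (hNn : N ≤ n)
    (hA : ∀ k : Fin n, 0 < singularValues A k ↔ (k : ℕ) < N)
    (hI : I.card < N) :
    sInf {σ : ℝ | (∃ l : Fin n, σ = singularValues (DI I * A) l) ∧ 0 < σ} ≤
      singularValues A ⟨N - I.card - 1, by omega⟩ := by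
  classical
  set B := DI I * A with hBdef
  have hAh := Matrix.isHermitian_conjTranspose_mul_self A
  have hBh := Matrix.isHermitian_conjTranspose_mul_self B
  set k : ℕ := N - I.card - 1 with hkdef
  have hkn : k < n := by omega
  -- pointwise description of B *ᵥ x
  have hBx : ∀ x : EuclideanSpace ℝ (Fin n), ∀ i : Fin m,
      (B *ᵥ x) i = (if i ∈ I then 0 else 1) * (A *ᵥ x) i := by
    intro x i
    rw [hBdef, ← Matrix.mulVec_mulVec, DI, Matrix.mulVec_diagonal]
  -- the quadratic form of B is dominated by that of A
  have hqmono : ∀ x : EuclideanSpace ℝ (Fin n),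
      (inner ℝ x (WithLp.toLp 2 ((Bᴴ * B) *ᵥ x)) : ℝ) ≤ (inner ℝ x (WithLp.toLp 2 ((Aᴴ * A) *ᵥ x)) : ℝ) := by
    intro x
    rw [SVaux.qform, SVaux.qform]
    refine Finset.sum_le_sum fun i _ => ?_
    rw [hBx]
    split_ifs
    · simpa using sq_nonneg ((A *ᵥ x) i)
    · rw [one_mul]
  -- the linear map recording the rows of A in I
  set φ : EuclideanSpace ℝ (Fin n) →ₗ[ℝ] (↥I → ℝ) :=
    (LinearMap.pi fun i : ↥I => (LinearMap.proj (i : Fin m)) ∘ₗ A.mulVecLin) ∘ₗ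
      (WithLp.linearEquiv 2 ℝ (Fin n → ℝ)).toLinearMap with hφ
  have hker : ∀ x ∈ LinearMap.ker φ, ∀ i ∈ I, (A *ᵥ x) i = 0 := by
    intro x hx i hi
    have := congrFun (LinearMap.mem_ker.mp hx) ⟨i, hi⟩
    simpa [hφ] using this
  have hkerrank : n - I.card ≤ finrank ℝ (LinearMap.ker φ) := by
    have h1 := LinearMap.finrank_range_add_finrank_ker φ
    have h2 : finrank ℝ (EuclideanSpace ℝ (Fin n)) = n := by
      simp [finrank_euclideanSpace]
    have h3 : finrank ℝ (LinearMap.range φ) ≤ I.card := by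
      have := Submodule.finrank_le (LinearMap.range φ)
      rwa [Module.finrank_fintype_fun_eq_card, Fintype.card_coe] at this
    omega
  -- the positive threshold c
  set c : ℝ := hAh.eigenvalues (Tuple.sort hAh.eigenvalues ⟨n - N, by omega⟩) with hcdef
  have hc_pos : 0 < c := by
    have h := (hA ⟨N - 1, by omega⟩).mpr (by simp; omega)
    rw [singularValues] at h
    have h2 := Real.sqrt_pos.mp h
    have hrev : (Fin.rev (⟨N - 1, by omega⟩ : Fin n)) = (⟨n - N, by omega⟩ : Fin n) := by
      ext
      simp only [Fin.val_rev, Fin.val_mk]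
      omega
    rwa [hrev] at h2
  -- Fact 1 : the k-th (descending) eigenvalue of BᴴB is at least c
  have fact1 : c ≤ hBh.eigenvalues (Tuple.sort hBh.eigenvalues ⟨n - 1 - k, by omega⟩) := by
    set Stop : Finset (Fin n) :=
      Finset.image (Tuple.sort hAh.eigenvalues) (Finset.Ici (⟨n - N, by omega⟩ : Fin n)) with hStop
    have hWrank : finrank ℝ (SVaux.espan hAh Stop) = N := by
      rw [SVaux.finrank_espan, hStop,
        Finset.card_image_of_injective _ (Equiv.injective _), Fin.card_Ici]
      simp; omega
    have hVrank : k + 1 ≤ finrank ℝ (LinearMap.ker φ ⊓ SVaux.espan hAh Stop :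
        Submodule ℝ (EuclideanSpace ℝ (Fin n))) := by
      have h1 := Submodule.finrank_sup_add_finrank_inf_eq (LinearMap.ker φ) (SVaux.espan hAh Stop)
      have h2 : finrank ℝ ↥(LinearMap.ker φ ⊔ SVaux.espan hAh Stop) ≤ n := by
        simpa [finrank_euclideanSpace] using
          Submodule.finrank_le (LinearMap.ker φ ⊔ SVaux.espan hAh Stop)
      omega
    refine SVaux.eigenvalue_ge hBh hkn hVrank ?_
    intro x hx
    obtain ⟨hx1, hx2⟩ := Submodule.mem_inf.mp hx
    have hmu : ∀ i ∈ Stop, c ≤ hAh.eigenvalues i := by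
      intro i hi
      rw [hStop, Finset.mem_image] at hi
      obtain ⟨j, hj, rfl⟩ := hi
      exact Tuple.monotone_sort hAh.eigenvalues (Finset.mem_Ici.mp hj)
    have h1 : c * ‖x‖ ^ 2 ≤ (inner ℝ x (WithLp.toLp 2 ((Aᴴ * A) *ᵥ x)) : ℝ) := SVaux.rayleigh_ge hAh hmu hx2
    have heq : (inner ℝ x (WithLp.toLp 2 ((Bᴴ * B) *ᵥ x)) : ℝ) = (inner ℝ x (WithLp.toLp 2 ((Aᴴ * A) *ᵥ x)) : ℝ) := by
      rw [SVaux.qform, SVaux.qform]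
      refine Finset.sum_congr rfl fun i _ => ?_
      rw [hBx]
      split_ifs with h
      · rw [hker x hx1 i h]; ring
      · ring
    linarith
  -- Fact 2 : the k-th (descending) eigenvalue of BᴴB is at most that of AᴴA
  have fact2 : hBh.eigenvalues (Tuple.sort hBh.eigenvalues ⟨n - 1 - k, by omega⟩) ≤
      hAh.eigenvalues (Tuple.sort hAh.eigenvalues ⟨n - 1 - k, by omega⟩) := by
    set Sbot : Finset (Fin n) :=
      Finset.image (Tuple.sort hAh.eigenvalues) (Finset.Iic (⟨n - 1 - k, by omega⟩ : Fin n))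
      with hSbot
    have hUrank : n - k ≤ finrank ℝ (SVaux.espan hAh Sbot) := by
      rw [SVaux.finrank_espan, hSbot,
        Finset.card_image_of_injective _ (Equiv.injective _), Fin.card_Iic]
      simp; omega
    refine SVaux.eigenvalue_le hBh hkn hUrank ?_
    intro x hx
    have hmu : ∀ i ∈ Sbot, hAh.eigenvalues i ≤
        hAh.eigenvalues (Tuple.sort hAh.eigenvalues ⟨n - 1 - k, by omega⟩) := by
      intro i hi
      rw [hSbot, Finset.mem_image] at hi
      obtain ⟨j, hj, rfl⟩ := hi
      exact Tuple.monotone_sort hAh.eigenvalues (Finset.mem_Iic.mp hj)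
    have h1 := SVaux.rayleigh_le hAh hmu hx
    have h2 := hqmono x
    linarith
  -- conclude
  have hrevk : (Fin.rev (⟨k, hkn⟩ : Fin n)) = (⟨n - 1 - k, by omega⟩ : Fin n) := by
    ext
    simp only [Fin.val_rev, Fin.val_mk]
    omega
  have hσpos : 0 < singularValues B ⟨k, hkn⟩ := by
    rw [singularValues, hrevk]
    exact Real.sqrt_pos.mpr (lt_of_lt_of_le hc_pos fact1)
  have hσle : singularValues B ⟨k, hkn⟩ ≤ singularValues A ⟨N - I.card - 1, by omega⟩ := by
    have : singularValues A ⟨N - I.card - 1, by omega⟩ = singularValues A ⟨k, hkn⟩ := rfl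
    rw [this, singularValues, singularValues, hrevk]
    exact Real.sqrt_le_sqrt fact2
  have hmem : singularValues B ⟨k, hkn⟩ ∈
      {σ : ℝ | (∃ l : Fin n, σ = singularValues B l) ∧ 0 < σ} :=
    ⟨⟨⟨k, hkn⟩, rfl⟩, hσpos⟩
  have hbdd : BddBelow {σ : ℝ | (∃ l : Fin n, σ = singularValues B l) ∧ 0 < σ} :=
    ⟨0, fun σ hσ => le_of_lt hσ.2⟩
  exact le_trans (csInf_le hbdd hmem) hσle
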